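/- Composition formula for associated Stirling–Carlitz numbers of the first kind: for every integer N ≥ 0, every k ≥ 1 and every m ≥ 0, (Π(k)/Π(m)) · {m brack k}_{C,≥N} = Σ_{i_1,…,i_k ≥ 0, r^{N+i_1}+⋯+r^{N+i_k} = m} (−1)^{Nk + i_1+⋯+i_k}/(L_{N+i_1} ⋯ L_{N+i_k}), where the sum is over all ordered k-tuples of nonnegative integers (i_1,…,i_k) with r^{N+i_1}+⋯+r^{N+i_k} = m (and is empty, giving 0, if no such tuple exists). -/

import Mathlib

/-!
Carlitz module: `Fq` is a finite field with `r = Fintype.card Fq` elements (so `r` is a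
power of a prime `p`), and `K = Fq(T)` is the field of rational functions over `Fq`.
-/

noncomputable section

variable (Fq : Type*) [Field Fq] [Fintype Fq]

/-- `r`, the number of elements of the finite field `Fq` (a prime power). -/
def rq : ℕ := Fintype.card Fq

/-- `[i] = T^{r^i} − T` in `K = Fq(T)`. -/
def carlitzBracket (i : ℕ) : RatFunc Fq := RatFunc.X ^ rq Fq ^ i - RatFunc.X

/-- `D_0 = 1`, `D_i = [i]·D_{i−1}^r`. -/
def carlitzD : ℕ → RatFunc Fq
  | 0 => 1
  | i + 1 => carlitzBracket Fq (i + 1) * carlitzD i ^ rq Fq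

/-- `L_0 = 1`, `L_i = [i]·L_{i−1}`. -/
def carlitzL : ℕ → RatFunc Fq
  | 0 => 1
  | i + 1 => carlitzBracket Fq (i + 1) * carlitzL i

/-- The Carlitz factorial `Π(i) = ∏_j D_j^{c_j}`, where `i = Σ_j c_j r^j` with
`0 ≤ c_j < r` is the base-`r` expansion of `i`. -/
def carlitzPi (i : ℕ) : RatFunc Fq :=
  ∏ j ∈ Finset.range (i + 1), carlitzD Fq j ^ (Nat.digits (rq Fq) i).getD j 0

/-- The power series `Σ_{j=0}^∞ (D_N/D_{N+j}) x^{r^{N+j} − r^N}`, i.e.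
`(e_C(x) − Σ_{i=0}^{N−1} x^{r^i}/D_i)·D_N/x^{r^N}`; it has constant term `1`. -/
def bcSeries (N : ℕ) : PowerSeries (RatFunc Fq) :=
  PowerSeries.mk fun m => ∑ j ∈ Finset.range (m + 1),
    if m = rq Fq ^ (N + j) - rq Fq ^ N then carlitzD Fq N / carlitzD Fq (N + j) else 0

/-- The truncated Bernoulli–Carlitz number `BC_{N,n}`: `BC_{N,n}/Π(n)` is the `n`-th
coefficient of the multiplicative inverse of the power series
`Σ_{j=0}^∞ (D_N/D_{N+j}) x^{r^{N+j} − r^N}`. -/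
def truncBC (N n : ℕ) : RatFunc Fq :=
  carlitzPi Fq n * PowerSeries.coeff n (bcSeries Fq N)⁻¹

/-- The power series `Σ_{j=0}^∞ (−1)^j (L_N/L_{N+j}) x^{r^{N+j} − r^N}`, i.e.
`(log_C(x) − Σ_{i=0}^{N−1} (−1)^i x^{r^i}/L_i)·(−1)^N L_N/x^{r^N}`;
it has constant term `1`. -/
def ccSeries (N : ℕ) : PowerSeries (RatFunc Fq) :=
  PowerSeries.mk fun m => ∑ j ∈ Finset.range (m + 1),
    if m = rq Fq ^ (N + j) - rq Fq ^ N then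
      (-1) ^ j * carlitzL Fq N / carlitzL Fq (N + j) else 0

/-- The truncated Cauchy–Carlitz number `CC_{N,n}`: `CC_{N,n}/Π(n)` is the `n`-th
coefficient of the multiplicative inverse of the power series
`Σ_{j=0}^∞ (−1)^j (L_N/L_{N+j}) x^{r^{N+j} − r^N}`. -/
def truncCC (N n : ℕ) : RatFunc Fq :=
  carlitzPi Fq n * PowerSeries.coeff n (ccSeries Fq N)⁻¹

/-- The tail `e_C(z) − 𝓔_{N−1}(z) = Σ_{i=N}^∞ z^{r^i}/D_i` of the Carlitz exponential. -/
def carlitzExpTail (N : ℕ) : PowerSeries (RatFunc Fq) :=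
  PowerSeries.mk fun m => ∑ j ∈ Finset.range (m + 1),
    if m = rq Fq ^ (N + j) then (carlitzD Fq (N + j))⁻¹ else 0

/-- The associated Stirling–Carlitz number of the second kind `{n brace k}_{C,≥N}`,
defined by `(e_C(z) − 𝓔_{N−1}(z))^k/Π(k) = Σ_n {n brace k}_{C,≥N} z^n/Π(n)`. -/
def stirling2C (N k n : ℕ) : RatFunc Fq :=
  carlitzPi Fq n / carlitzPi Fq k * PowerSeries.coeff n (carlitzExpTail Fq N ^ k)

/-- The tail `log_C(z) − 𝓕_{N−1}(z) = Σ_{i=N}^∞ (−1)^i z^{r^i}/L_i` of the Carlitz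
logarithm. -/
def carlitzLogTail (N : ℕ) : PowerSeries (RatFunc Fq) :=
  PowerSeries.mk fun m => ∑ j ∈ Finset.range (m + 1),
    if m = rq Fq ^ (N + j) then (-1) ^ (N + j) * (carlitzL Fq (N + j))⁻¹ else 0

/-- The associated Stirling–Carlitz number of the first kind `{n brack k}_{C,≥N}`,
defined by `(log_C(z) − 𝓕_{N−1}(z))^k/Π(k) = Σ_n {n brack k}_{C,≥N} z^n/Π(n)`. -/
def stirling1C (N k n : ℕ) : RatFunc Fq :=
  carlitzPi Fq n / carlitzPi Fq k * PowerSeries.coeff n (carlitzLogTail Fq N ^ k)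

lemma two_le_rq : 2 ≤ rq Fq := Fintype.one_lt_card

lemma carlitzBracket_ne_zero {i : ℕ} (hi : 1 ≤ i) : carlitzBracket Fq i ≠ 0 := by
  have hr : 2 ≤ rq Fq := two_le_rq Fq
  have h2 : 2 ≤ rq Fq ^ i := le_trans hr (Nat.le_self_pow (by omega) _)
  unfold carlitzBracket
  rw [sub_ne_zero]
  intro h
  rw [← RatFunc.algebraMap_X, ← map_pow] at h
  have h3 := RatFunc.algebraMap_injective Fq h
  have hdeg := congrArg Polynomial.natDegree h3
  simp only [Polynomial.natDegree_X_pow, Polynomial.natDegree_X] at hdeg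
  omega

lemma carlitzL_ne_zero (n : ℕ) : carlitzL Fq n ≠ 0 := by
  induction n with
  | zero => simp [carlitzL]
  | succ n ih => exact mul_ne_zero (carlitzBracket_ne_zero Fq (by omega)) ih

lemma carlitzD_ne_zero (n : ℕ) : carlitzD Fq n ≠ 0 := by
  induction n with
  | zero => simp [carlitzD]
  | succ n ih =>
      exact mul_ne_zero (carlitzBracket_ne_zero Fq (by omega)) (pow_ne_zero _ ih)

lemma carlitzPi_ne_zero (n : ℕ) : carlitzPi Fq n ≠ 0 :=
  Finset.prod_ne_zero_iff.mpr fun j _ => pow_ne_zero _ (carlitzD_ne_zero Fq j)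

lemma coeff_logTail_pow (N i : ℕ) :
    PowerSeries.coeff (rq Fq ^ (N + i)) (carlitzLogTail Fq N) =
      (-1) ^ (N + i) * (carlitzL Fq (N + i))⁻¹ := by
  have hr : 1 < rq Fq := two_le_rq Fq
  rw [carlitzLogTail, PowerSeries.coeff_mk]
  rw [Finset.sum_eq_single i]
  · rw [if_pos rfl]
  · intro b _ hb
    rw [if_neg]
    intro h
    exact hb (by have := Nat.pow_right_injective (two_le_rq Fq) h; omega)
  · intro h
    exfalso
    apply h
    have h1 := Nat.lt_pow_self (n := N + i) hr
    exact Finset.mem_range.mpr (by omega)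

lemma coeff_logTail_ne_zero (N c : ℕ)
    (h : PowerSeries.coeff c (carlitzLogTail Fq N) ≠ 0) :
    ∃ j, c = rq Fq ^ (N + j) := by
  by_contra hc
  push_neg at hc
  apply h
  rw [carlitzLogTail, PowerSeries.coeff_mk]
  exact Finset.sum_eq_zero fun j _ => if_neg (hc j)

/-- composition formula for the associated Stirling–Carlitz numbers of
the first kind. -/
theorem stirling1C_composition (N k m : ℕ) (hk : 1 ≤ k) :
    carlitzPi Fq k / carlitzPi Fq m * stirling1C Fq N k m =
      ∑ᶠ (i : Fin k → ℕ) (_ : ∑ j, rq Fq ^ (N + i j) = m),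
        (-1 : RatFunc Fq) ^ (N * k + ∑ j, i j) * ∏ j, (carlitzL Fq (N + i j))⁻¹ := by
  classical
  have hr : 1 < rq Fq := two_le_rq Fq
  have hπk := carlitzPi_ne_zero Fq k
  have hπm := carlitzPi_ne_zero Fq m
  unfold stirling1C
  have hcancel : ∀ x : RatFunc Fq,
      carlitzPi Fq k / carlitzPi Fq m * (carlitzPi Fq m / carlitzPi Fq k * x) = x := by
    intro x
    field_simp
  rw [hcancel]
  set t : Finset (Fin k → ℕ) :=
    (Fintype.piFinset fun _ : Fin k => Finset.range (m + 1)).filter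
      (fun i => ∑ j, rq Fq ^ (N + i j) = m) with ht
  have hmem : ∀ (x : Fin k → ℕ), (∑ j, rq Fq ^ (N + x j) = m) ↔ x ∈ t := by
    intro x
    simp only [ht, Finset.mem_filter, Fintype.mem_piFinset, Finset.mem_range]
    constructor
    · intro hx
      refine ⟨fun j => ?_, hx⟩
      have h1 : rq Fq ^ (N + x j) ≤ m := by
        calc rq Fq ^ (N + x j) ≤ ∑ j, rq Fq ^ (N + x j) :=
              Finset.single_le_sum (f := fun j => rq Fq ^ (N + x j))
                (fun _ _ => Nat.zero_le _) (Finset.mem_univ j)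
          _ = m := hx
      have h2 : N + x j < rq Fq ^ (N + x j) := Nat.lt_pow_self hr
      omega
    · exact fun h => h.2
  rw [finsum_cond_eq_sum_of_cond_iff _ (fun {x} _ => hmem x)]
  rw [PowerSeries.coeff_pow]
  have key : ∀ a ∈ Finset.finsuppAntidiag (Finset.range k) m,
      (∏ i ∈ Finset.range k,
        PowerSeries.coeff (a i) (carlitzLogTail Fq N)) ≠ 0 →
      ∀ j, j < k → a j = rq Fq ^ (N + (Nat.log (rq Fq) (a j) - N)) := by
    intro a _ hprod j hj
    have hc : PowerSeries.coeff (a j) (carlitzLogTail Fq N) ≠ 0 := by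
      intro h0
      exact hprod (Finset.prod_eq_zero (Finset.mem_range.mpr hj) h0)
    obtain ⟨e, he⟩ := coeff_logTail_ne_zero Fq N (a j) hc
    rw [he, Nat.log_pow hr]
    congr 2
    omega
  refine Finset.sum_bij_ne_zero
    (fun a _ _ => fun j : Fin k => Nat.log (rq Fq) (a j.val) - N) ?_ ?_ ?_ ?_
  · -- maps into t
    intro a h₁ h₂
    have hkey := key a h₁ h₂
    have hsum : ∑ j : Fin k, rq Fq ^ (N + (Nat.log (rq Fq) (a j.val) - N)) = m := by
      have hs : ∑ j : Fin k, a j.val = m := by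
        rw [Fin.sum_univ_eq_sum_range (fun i => a i) k]
        exact (Finset.mem_finsuppAntidiag.mp h₁).1
      rw [← hs]
      exact Finset.sum_congr rfl fun j _ => (hkey j.val j.isLt).symm
    exact (hmem _).mp hsum
  · -- injective
    intro a₁ h₁₁ h₁₂ a₂ h₂₁ h₂₂ heq
    ext j
    by_cases hj : j < k
    · have e1 := key a₁ h₁₁ h₁₂ j hj
      have e2 := key a₂ h₂₁ h₂₂ j hj
      have hfj := congrFun heq (⟨j, hj⟩ : Fin k)
      simp only at hfj
      rw [e1, e2, hfj]
    · have s1 : j ∉ a₁.support := fun hs =>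
        hj (Finset.mem_range.mp ((Finset.mem_finsuppAntidiag.mp h₁₁).2 hs))
      have s2 : j ∉ a₂.support := fun hs =>
        hj (Finset.mem_range.mp ((Finset.mem_finsuppAntidiag.mp h₂₁).2 hs))
      rw [Finsupp.notMem_support_iff.mp s1, Finsupp.notMem_support_iff.mp s2]
  · -- surjective
    intro b hb _
    have hb' := (Finset.mem_filter.mp (ht ▸ hb)).2
    set g : ℕ → ℕ := fun j => if h : j < k then rq Fq ^ (N + b ⟨j, h⟩) else 0 with hg
    have hsupp : ∀ j, g j ≠ 0 → j ∈ Finset.range k := by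
      intro j hj
      rw [Finset.mem_range]
      by_contra h
      exact hj (dif_neg (by omega))
    set a : ℕ →₀ ℕ := Finsupp.onFinset (Finset.range k) g hsupp with ha
    have haval : ∀ j : Fin k, a j.val = rq Fq ^ (N + b j) := by
      intro j
      show g j.val = _
      rw [hg]
      simp only [j.isLt, dif_pos, Fin.eta]
    have hmem1 : a ∈ Finset.finsuppAntidiag (Finset.range k) m := by
      rw [Finset.mem_finsuppAntidiag]
      constructor
      · rw [← Fin.sum_univ_eq_sum_range (fun i => a i) k]
        rw [← hb']
        exact Finset.sum_congr rfl fun j _ => haval j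
      · exact fun j hj => hsupp j (Finsupp.mem_support_iff.mp hj)
    have hne : (∏ i ∈ Finset.range k,
        PowerSeries.coeff (a i) (carlitzLogTail Fq N)) ≠ 0 := by
      rw [Finset.prod_ne_zero_iff]
      intro i hi
      have hik : i < k := Finset.mem_range.mp hi
      have : a i = rq Fq ^ (N + b ⟨i, hik⟩) := haval ⟨i, hik⟩
      rw [this, coeff_logTail_pow]
      exact mul_ne_zero (pow_ne_zero _ (neg_ne_zero.mpr one_ne_zero))
        (inv_ne_zero (carlitzL_ne_zero Fq _))
    refine ⟨a, hmem1, hne, ?_⟩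
    funext j
    show Nat.log (rq Fq) (a j.val) - N = b j
    rw [haval j, Nat.log_pow hr]
    omega
  · -- values match
    intro a h₁ h₂
    have hkey := key a h₁ h₂
    set e : Fin k → ℕ := fun j => Nat.log (rq Fq) (a j.val) - N with he
    have ha2 : ∀ j : Fin k, a j.val = rq Fq ^ (N + e j) := fun j => hkey j.val j.isLt
    calc ∏ i ∈ Finset.range k,
          PowerSeries.coeff (a i) (carlitzLogTail Fq N)
        = ∏ j : Fin k,
            PowerSeries.coeff (a j.val) (carlitzLogTail Fq N) :=
          (Fin.prod_univ_eq_prod_range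
            (fun i => PowerSeries.coeff (a i) (carlitzLogTail Fq N)) k).symm
      _ = ∏ j : Fin k, ((-1) ^ (N + e j) * (carlitzL Fq (N + e j))⁻¹) := by
          refine Finset.prod_congr rfl fun j _ => ?_
          rw [ha2 j, coeff_logTail_pow]
      _ = (∏ j : Fin k, (-1 : RatFunc Fq) ^ (N + e j)) *
            ∏ j : Fin k, (carlitzL Fq (N + e j))⁻¹ := Finset.prod_mul_distrib
      _ = (-1 : RatFunc Fq) ^ (N * k + ∑ j, e j) *
            ∏ j : Fin k, (carlitzL Fq (N + e j))⁻¹ := by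
          rw [Finset.prod_pow_eq_pow_sum]
          congr 2
          rw [Finset.sum_add_distrib, Finset.sum_const, Finset.card_univ,
            Fintype.card_fin, smul_eq_mul]
          ring

end
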